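/- Let G be a finite nilpotent group that is not a p-group, and A ≤ Aut(G). If for every prime p dividing |G| the Sylow p-subgroup of G has only one A-orbit of subgroups of order p, then Δ(G,A) is connected with diameter at most 2. -/

import Mathlib

open Subgroup

/-- The A-orbit of x under a subgroup A of Aut(G). -/
def aorb {G : Type*} [Group G] (A : Subgroup (MulAut G)) (x : G) : Set G :=
  {y | ∃ a ∈ A, a x = y}

/-- The vertex set of the automorphic cyclic graph: A-orbits of nontrivial elements. -/
def DeltaVerts (G : Type*) [Group G] (A : Subgroup (MulAut G)) :=
  {S : Set G // ∃ x : G, x ≠ 1 ∧ S = aorb A x}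

/-- The automorphic cyclic graph Δ(G,A). -/
def Delta (G : Type*) [Group G] (A : Subgroup (MulAut G)) :
    SimpleGraph (DeltaVerts G A) where
  Adj S T := S ≠ T ∧ ∃ x ∈ S.1, ∃ y ∈ T.1,
    IsCyclic (Subgroup.closure {x, y} : Subgroup G)
  symm := by
    constructor
    rintro S T ⟨hne, x, hx, y, hy, hc⟩
    exact ⟨hne.symm, y, hy, x, hx, by rwa [Set.pair_comm]⟩
  loopless := ⟨fun S h => h.1 rfl⟩

/-- The vertex corresponding to the A-orbit of a nontrivial element x. -/
def vtx {G : Type*} [Group G] (A : Subgroup (MulAut G)) (x : G) (hx : x ≠ 1) :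
    DeltaVerts G A :=
  ⟨aorb A x, x, hx, rfl⟩

/-!
For a prime `p` dividing `|G|` and `w` of order `p`, the vertex `w^A` is adjacent to every other
vertex. If `p ∤ |x|`, then `x` commutes with `w` and the orders are coprime, so `⟨x, w⟩ = ⟨x w⟩`
is cyclic. If `p ∣ |x|`, transitivity of `A` on the subgroups of order `p` moves `⟨w⟩` onto the
subgroup of order `p` of `⟨x⟩`, so some `a w` lies in `⟨x⟩`. A graph with such a dominating
vertex is connected of diameter at most `2`.
-/

namespace SimpleGraph

variable {V : Type*} {Γ : SimpleGraph V}

lemma exists_walk_length_le_one_of_eq_or_adj {u v : V} (h : u = v ∨ Γ.Adj u v) :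
    ∃ p : Γ.Walk u v, p.length ≤ 1 := by
  rcases h with rfl | h
  · exact ⟨Walk.nil, zero_le_one⟩
  · exact ⟨h.toWalk, le_rfl⟩

lemma connected_of_forall_eq_or_adj (w : V) (h : ∀ u, u = w ∨ Γ.Adj u w) : Γ.Connected := by
  have : Nonempty V := ⟨w⟩
  refine ⟨fun u v => ?_⟩
  obtain ⟨p, -⟩ := exists_walk_length_le_one_of_eq_or_adj (h u)
  obtain ⟨q, -⟩ := exists_walk_length_le_one_of_eq_or_adj (h v)
  exact ⟨p.append q.reverse⟩

lemma dist_le_two_of_forall_eq_or_adj (w : V) (h : ∀ u, u = w ∨ Γ.Adj u w) (u v : V) :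
    Γ.dist u v ≤ 2 := by
  obtain ⟨p, hp⟩ := exists_walk_length_le_one_of_eq_or_adj (h u)
  obtain ⟨q, hq⟩ := exists_walk_length_le_one_of_eq_or_adj (h v)
  calc Γ.dist u v ≤ (p.append q.reverse).length := dist_le _
    _ ≤ 2 := by rw [Walk.length_append, Walk.length_reverse]; omega

end SimpleGraph

section CyclicClosure

variable {G : Type*} [Group G]

lemma closure_pair_eq_zpowers_of_mem {x y : G} (h : y ∈ zpowers x) :
    closure {x, y} = zpowers x :=
  le_antisymm (closure_le _ |>.mpr <| Set.insert_subset_iff.mpr ⟨mem_zpowers x, by simpa using h⟩)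
    (zpowers_le.mpr <| subset_closure <| Set.mem_insert x {y})

lemma Commute.mem_zpowers_mul_of_coprime {x y : G} (hc : Commute x y)
    (h : (orderOf y).Coprime (orderOf x)) : x ∈ zpowers (x * y) := by
  obtain ⟨k, hk⟩ := exists_pow_eq_self_of_coprime h
  have hpow : (x * y) ^ orderOf y = x ^ orderOf y := by
    rw [hc.mul_pow, pow_orderOf_eq_one, mul_one]
  have hmem : ((x * y) ^ orderOf y) ^ k ∈ zpowers (x * y) := pow_mem (pow_mem (mem_zpowers _) _) _
  rwa [hpow, hk] at hmem

lemma Commute.closure_pair_eq_zpowers_mul {x y : G} (hc : Commute x y)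
    (h : (orderOf x).Coprime (orderOf y)) : closure {x, y} = zpowers (x * y) := by
  have hx : x ∈ zpowers (x * y) := hc.mem_zpowers_mul_of_coprime h.symm
  have hy : y ∈ zpowers (x * y) := hc.eq ▸ hc.symm.mem_zpowers_mul_of_coprime h
  refine le_antisymm (closure_le _ |>.mpr <| Set.insert_subset_iff.mpr ⟨hx, by simpa using hy⟩) ?_
  exact zpowers_le.mpr <| mul_mem (subset_closure <| Set.mem_insert x {y})
    (subset_closure <| Set.mem_insert_of_mem x rfl)

end CyclicClosure

section Nilpotent

variable {G : Type*} [Group G] [Finite G] [Group.IsNilpotent G]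

lemma Sylow.le_centralizer_of_ne {p q : ℕ} [Fact p.Prime] [Fact q.Prime] (hpq : p ≠ q)
    (P : Sylow p G) (Q : Sylow q G) : (Q : Subgroup G) ≤ centralizer (P : Set G) :=
  fun y hy => mem_centralizer_iff.mpr fun x hx =>
    commute_of_normal_of_disjoint _ _ inferInstance inferInstance
      (IsPGroup.disjoint_of_ne p q hpq _ _ P.isPGroup' Q.isPGroup') x y hx hy

/-- The centralizer of `P` is normal and contains a Sylow `q`-subgroup for every `q ≠ p`, so its
index is a power of `p`; hence every element of order prime to `p` lies in it. -/
lemma Sylow.commute_of_not_dvd_orderOf {p : ℕ} [Fact p.Prime] (P : Sylow p G) {w x : G}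
    (hw : w ∈ P) (hx : ¬ p ∣ orderOf x) : Commute w x := by
  set C := centralizer ((P : Subgroup G) : Set G)
  have hcop : C.index.Coprime (orderOf x) := by
    refine Nat.coprime_of_dvd fun q hq hqC hqx => ?_
    have : Fact q.Prime := ⟨hq⟩
    have hpq : p ≠ q := by rintro rfl; exact hx hqx
    let Q : Sylow q G := default
    exact Q.not_dvd_index (hqC.trans (index_dvd_of_le (P.le_centralizer_of_ne hpq Q)))
  obtain ⟨m, hm⟩ := exists_pow_eq_self_of_coprime hcop
  have hxC : x ∈ C := hm ▸ pow_mem (C.pow_index_mem x) m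
  exact mem_centralizer_iff.mp hxC w hw

end Nilpotent

section Delta

variable {G : Type*} [Group G] (A : Subgroup (MulAut G))

lemma mem_aorb_self (x : G) : x ∈ aorb A x := ⟨1, A.one_mem, rfl⟩

lemma Delta.eq_or_adj_of_isCyclic {S T : DeltaVerts G A} {x y : G} (hx : x ∈ S.1) (hy : y ∈ T.1)
    (h : IsCyclic (closure {x, y} : Subgroup G)) : S = T ∨ (Delta G A).Adj S T :=
  or_iff_not_imp_left.mpr fun hne => ⟨hne, x, hx, y, hy, h⟩

lemma Delta.eq_or_adj_vtx_of_orderOf_eq_prime [Finite G] [Group.IsNilpotent G] {p : ℕ} (hp : p.Prime)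
    (htrans : ∀ S T : Subgroup G, Nat.card S = p → Nat.card T = p →
      ∃ a ∈ A, Subgroup.map a.toMonoidHom S = T)
    {w : G} (hw : orderOf w = p) (hw1 : w ≠ 1) (u : DeltaVerts G A) :
    u = vtx A w hw1 ∨ (Delta G A).Adj u (vtx A w hw1) := by
  obtain ⟨S, x, hx, rfl⟩ := u
  by_cases hpx : p ∣ orderOf x
  · have hz : x ^ (orderOf x / p) ∈ zpowers x := pow_mem (mem_zpowers x) _
    obtain ⟨a, ha, hmap⟩ := htrans (zpowers w) (zpowers (x ^ (orderOf x / p)))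
      (by rw [Nat.card_zpowers, hw])
      (by rw [Nat.card_zpowers, orderOf_pow_orderOf_div (orderOf_pos x).ne' hpx])
    have haw : a w ∈ zpowers x :=
      zpowers_le.mpr hz (hmap ▸ mem_map_of_mem a.toMonoidHom (mem_zpowers w))
    refine Delta.eq_or_adj_of_isCyclic A (mem_aorb_self A x) ⟨a, ha, rfl⟩ ?_
    rw [closure_pair_eq_zpowers_of_mem haw]
    infer_instance
  · have : Fact p.Prime := ⟨hp⟩
    obtain ⟨P, hP⟩ := (IsPGroup.of_card (p := p) (n := 1) (G := zpowers w)
      (by rw [Nat.card_zpowers, hw, pow_one])).exists_le_sylow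
    have hc : Commute x w := (P.commute_of_not_dvd_orderOf (hP (mem_zpowers w)) hpx).symm
    have hcop : (orderOf x).Coprime (orderOf w) := hw ▸ (hp.coprime_iff_not_dvd.mpr hpx).symm
    refine Delta.eq_or_adj_of_isCyclic A (mem_aorb_self A x) (mem_aorb_self A w) ?_
    rw [hc.closure_pair_eq_zpowers_mul hcop]
    infer_instance

end Delta

theorem stmt7 {G : Type*} [Group G] [Finite G] (A : Subgroup (MulAut G))
    [Group.IsNilpotent G]
    (h : ∃ p q : ℕ, p.Prime ∧ q.Prime ∧ p ≠ q ∧ p ∣ Nat.card G ∧ q ∣ Nat.card G)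
    (htrans : ∀ p : ℕ, p.Prime → p ∣ Nat.card G →
        ∀ S T : Subgroup G, Nat.card S = p → Nat.card T = p →
          ∃ a ∈ A, Subgroup.map a.toMonoidHom S = T) :
    (Delta G A).Connected ∧ ∀ u v : DeltaVerts G A, (Delta G A).dist u v ≤ 2 := by
  obtain ⟨p, -, hp, -, -, hpG, -⟩ := h
  have : Fact p.Prime := ⟨hp⟩
  obtain ⟨w, hw⟩ := exists_prime_orderOf_dvd_card' p hpG
  have hw1 : w ≠ 1 := fun h1 => hp.ne_one (hw ▸ orderOf_eq_one_iff.mpr h1)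
  have hdom := Delta.eq_or_adj_vtx_of_orderOf_eq_prime A hp (htrans p hp hpG) hw hw1
  exact ⟨(Delta G A).connected_of_forall_eq_or_adj _ hdom,
    (Delta G A).dist_le_two_of_forall_eq_or_adj _ hdom⟩
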